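/- Let G be a profinite group and x ∈ G an element such that x^d is a (left) Engel element of G for some positive integer d. Let x* be the homogeneous element of the Lie algebra L(G) over F_p associated with the p-dimension central series of G corresponding to x. Then x* is ad-nilpotent in L(G). -/

import Mathlib

open scoped commutatorElement

/-- Iterated (left) Engel commutator. -/
def engel {G : Type*} [Group G] (g x : G) : ℕ → G
  | 0 => g
  | n + 1 => ⁅engel g x n, x⁆


/-
Write `d = p ^ s * t` with `p ∤ t`. Since `G` is compact and `x ^ d` is Engel, a Baire category
argument gives one `g₀` and an open normal subgroup `U` on which `[g₀ U, n x^d] = 1`; as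
`[·, n x^d]` is multiplicative modulo higher terms, `(x ^ d)*` is ad-nilpotent. Again modulo
higher terms `[y, N b^t] ≡ [y, N b]^(t^N)`, and `t` is prime to `p`, so `(x ^ p ^ s)*` is
ad-nilpotent. Lazard's lemma `(ad x*)^p = ad (x^p)*` holds in an abelian section of exponent `p`,
where it is the identity `(1 - σ)^(p-1) = 1 + σ + ⋯ + σ^(p-1)` over `𝔽_p` for conjugation `σ`
by `x`; applied `s` times it transfers ad-nilpotency to `x*` in high degrees, and a few more
brackets by `x` reach high degree from any `y`.
-/

open Finset

theorem engel_add {G : Type*} [Group G] (g x : G) (m n : ℕ) :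
    engel g x (m + n) = engel (engel g x m) x n := by
  induction n with
  | zero => rfl
  | succ n ih => rw [← Nat.add_assoc, engel, engel, ih]

theorem map_engel {G H : Type*} [Group G] [Group H] (f : G →* H) (g x : G) (n : ℕ) :
    f (engel g x n) = engel (f g) (f x) n := by
  induction n with
  | zero => rfl
  | succ n ih => rw [engel, engel, map_commutatorElement, ih]

theorem engel_succ_eq_iterate {G : Type*} [Group G] (y x : G) (n : ℕ) :
    engel y x (n + 1) = (fun g ↦ ⁅g, x⁆)^[n] ⁅y, x⁆ := by
  induction n with
  | zero => rfl
  | succ n ih => rw [Function.iterate_succ_apply', ← ih]; rfl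

open Polynomial in
theorem one_sub_pow_pred_eq_geom_sum {R : Type*} [Ring R] {p : ℕ} [Fact p.Prime]
    [Algebra (ZMod p) R] (a : R) : (1 - a) ^ (p - 1) = ∑ k ∈ range p, a ^ k := by
  have hX : (1 - X : (ZMod p)[X]) ^ (p - 1) = ∑ k ∈ range p, X ^ k := by
    have h : (1 - X : (ZMod p)[X]) ≠ 0 := fun h ↦ by simpa using congrArg (eval 0) h
    refine mul_left_cancel₀ h ?_
    rw [← pow_succ', Nat.sub_add_cancel (Fact.out : p.Prime).one_le, sub_pow_char, one_pow,
      mul_neg_geom_sum]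
  simpa using congrArg (aeval a) hX

/-- In an abelian group of exponent `p`, with `σ` written multiplicatively, this is the
identity `(1 - σ) ^ (p - 1) = 1 + σ + ⋯ + σ ^ (p - 1)` of `𝔽_p[σ]`. -/
theorem iterate_mul_inv_map_pred_eq_prod {M : Type*} [CommGroup M] {p : ℕ} [Fact p.Prime]
    (hM : ∀ u : M, u ^ p = 1) (σ : M →* M) (ζ : M) :
    (fun u ↦ u * (σ u)⁻¹)^[p - 1] ζ = ∏ k ∈ range p, σ^[k] ζ := by
  have : Module (ZMod p) (Additive M) :=
    AddCommGroup.zmodModule fun u ↦ congrArg Additive.ofMul (hM u.toMul)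
  let f : Module.End (ZMod p) (Additive M) := (MonoidHom.toAdditive σ).toZModLinearMap p
  have hf : Function.Semiconj Additive.ofMul σ ⇑f := fun _ ↦ rfl
  have hT : Function.Semiconj Additive.ofMul (fun u ↦ u * (σ u)⁻¹) ⇑(1 - f) := fun u ↦ by
    simp [f, sub_eq_add_neg]
  apply Additive.ofMul.injective
  have := LinearMap.congr_fun (one_sub_pow_pred_eq_geom_sum (p := p) f) (Additive.ofMul ζ)
  rw [Module.End.pow_apply, ← hT.iterate_right, LinearMap.sum_apply] at this
  rw [this, ofMul_prod]
  refine sum_congr rfl fun k _ ↦ ?_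
  rw [Module.End.pow_apply, ← hf.iterate_right]

open IsMulCommutative in
theorem engel_prime_eq_commutatorElement_pow {G : Type*} [Group G] {p : ℕ} [Fact p.Prime]
    (A : Subgroup G) [IsMulCommutative A] (hA : ∀ a ∈ A, a ^ p = 1) {x : G}
    (hx : ∀ a ∈ A, x * a * x⁻¹ ∈ A) {y : G} (hyx : ⁅y, x⁆ ∈ A) :
    engel y x p = ⁅y, x ^ p⁆ := by
  let σ : A →* A :=
    ((MulAut.conj x).toMonoidHom.comp A.subtype).codRestrict A fun a ↦ hx a a.2
  let ζ : A := ⟨⁅y, x⁆, hyx⟩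
  have hσ (a : A) : (σ a : G) = x * a * x⁻¹ := rfl
  have hT : Function.Semiconj ((↑) : A → G) (fun u ↦ u * (σ u)⁻¹) (fun g ↦ ⁅g, x⁆) :=
    fun u ↦ by simp only [Subgroup.coe_mul, Subgroup.coe_inv, hσ, commutatorElement_def]; group
  have hengel (n : ℕ) : engel y x (n + 1) = ((fun u ↦ u * (σ u)⁻¹)^[n] ζ : A) := by
    rw [engel_succ_eq_iterate, hT.iterate_right]
  have hpow (n : ℕ) : ⁅y, x ^ n⁆ = ((∏ k ∈ range n, σ^[k] ζ : A) : G) := by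
    induction n with
    | zero => simp
    | succ n ih =>
      rw [show ⁅y, x ^ (n + 1)⁆ = ⁅y, x⁆ * (x * ⁅y, x ^ n⁆ * x⁻¹) by
          rw [pow_succ', commutatorElement_mul_right_eq_mul_conj]; group, ih, ← hσ,
        show ⁅y, x⁆ = (ζ : G) from rfl, ← Subgroup.coe_mul, prod_range_succ', mul_comm,
        map_prod]
      simp only [Function.iterate_succ_apply', Function.iterate_zero_apply]
  have hp := (Fact.out : p.Prime).one_le
  rw [← Nat.sub_add_cancel hp, hengel,
    iterate_mul_inv_map_pred_eq_prod (fun a : A ↦ Subtype.ext (hA a a.2)) σ ζ,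
    Nat.sub_add_cancel hp, hpow]

/-- The series is indexed from `1`; `D 0` plays no role. -/
structure NpSeries (G : Type*) [Group G] (p : ℕ) where
  D : ℕ → Subgroup G
  D_one : D 1 = ⊤
  D_succ_le (k : ℕ) : D (k + 1) ≤ D k
  commutatorElement_mem {a b : ℕ} {u v : G} : u ∈ D a → v ∈ D b → ⁅u, v⁆ ∈ D (a + b)
  pow_prime_mem {a : ℕ} {u : G} : u ∈ D a → u ^ p ∈ D (p * a)

notation:50 a " ≡ " b " mod " N =>
  QuotientGroup.mk (s := N) a = QuotientGroup.mk (s := N) b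

namespace NpSeries

variable {G : Type*} [Group G] {p : ℕ} (S : NpSeries G p)

theorem D_antitone : Antitone S.D := antitone_nat_of_succ_le S.D_succ_le

theorem mem_D_one (g : G) : g ∈ S.D 1 := S.D_one ▸ Subgroup.mem_top g

theorem commutatorElement_mem_of_le {a b K : ℕ} {u v : G} (hK : K ≤ a + b) (hu : u ∈ S.D a)
    (hv : v ∈ S.D b) : ⁅u, v⁆ ∈ S.D K :=
  S.D_antitone hK (S.commutatorElement_mem hu hv)

theorem engel_mem {i j : ℕ} {x y : G} (hy : y ∈ S.D j) (hx : x ∈ S.D i) (n : ℕ) :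
    engel y x n ∈ S.D (j + n * i) := by
  induction n with
  | zero => simpa [engel] using hy
  | succ n ih => exact S.D_antitone (le_of_eq (by ring)) (S.commutatorElement_mem ih hx)

theorem pow_prime_pow_mem {i : ℕ} {x : G} (hx : x ∈ S.D i) (s : ℕ) :
    x ^ p ^ s ∈ S.D (p ^ s * i) := by
  induction s with
  | zero => simpa using hx
  | succ s ih =>
    rw [pow_succ, pow_mul]
    exact S.D_antitone (le_of_eq (by ring)) (S.pow_prime_mem ih)

instance normal (K : ℕ) : (S.D K).Normal where
  conj_mem w hw g := by
    rw [show g * w * g⁻¹ = ⁅g, w⁆ * w by group]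
    exact mul_mem (S.commutatorElement_mem_of_le le_add_self (S.mem_D_one g) hw) hw

theorem mk_conj {a b K : ℕ} {u v : G} (hK : K ≤ a + b) (hu : u ∈ S.D a) (hv : v ∈ S.D b) :
    u * v * u⁻¹ ≡ v mod S.D K := by
  rw [show u * v * u⁻¹ = ⁅u, v⁆ * v by group, QuotientGroup.mk_mul,
    (QuotientGroup.eq_one_iff _).2 (S.commutatorElement_mem_of_le hK hu hv), one_mul]

theorem mk_mul_comm {a b K : ℕ} {u v : G} (hK : K ≤ a + b) (hu : u ∈ S.D a)
    (hv : v ∈ S.D b) : u * v ≡ v * u mod S.D K := by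
  rw [show u * v = u * v * u⁻¹ * u by group, QuotientGroup.mk_mul, S.mk_conj hK hu hv,
    ← QuotientGroup.mk_mul]

theorem mk_of_le {K K' : ℕ} (hK : K ≤ K') {u v : G} (h : u ≡ v mod S.D K') :
    u ≡ v mod S.D K :=
  QuotientGroup.eq.2 (S.D_antitone hK (QuotientGroup.eq.1 h))

theorem commutatorElement_congr_left {A M : ℕ} {u v c : G} (h : u ≡ v mod S.D A)
    (hc : c ∈ S.D M) : ⁅u, c⁆ ≡ ⁅v, c⁆ mod S.D (A + M) := by
  have he : u⁻¹ * v ∈ S.D A := QuotientGroup.eq.1 h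
  rw [show v = u * (u⁻¹ * v) by group, commutatorElement_mul_left_eq_conj_mul,
    QuotientGroup.mk_mul, (QuotientGroup.eq_one_iff _).2
      ((S.normal _).conj_mem _ (S.commutatorElement_mem he hc) u), one_mul]

theorem engel_congr_left {A M : ℕ} {u v c : G} (h : u ≡ v mod S.D A) (hc : c ∈ S.D M)
    (n : ℕ) : engel u c n ≡ engel v c n mod S.D (A + n * M) := by
  induction n with
  | zero => rw [zero_mul, add_zero]; exact h
  | succ n ih => exact S.mk_of_le (le_of_eq (by ring)) (S.commutatorElement_congr_left ih hc)

theorem engel_mul_modEq {j m : ℕ} {a u : G} (ha : a ∈ S.D m) (hu : u ∈ S.D j) (g : G) (n : ℕ) :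
    engel g a n * engel u a n ≡ engel (g * u) a n mod S.D (j + n * m + 1) := by
  induction n with
  | zero => rfl
  | succ n ih =>
    have hA : engel g a n ∈ S.D (1 + n * m) := S.engel_mem (S.mem_D_one g) ha n
    have hAa : engel g a (n + 1) ∈ S.D (1 + (n + 1) * m) := S.engel_mem (S.mem_D_one g) ha _
    have hBa : engel u a (n + 1) ∈ S.D (j + (n + 1) * m) := S.engel_mem hu ha _
    calc engel g a (n + 1) * engel u a (n + 1)
        ≡ engel u a (n + 1) * engel g a (n + 1) mod S.D (j + (n + 1) * m + 1) :=
          S.mk_mul_comm (by omega) hAa hBa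
      _ = (engel g a n * engel u a (n + 1) * (engel g a n)⁻¹ * engel g a (n + 1) : G) := by
          rw [QuotientGroup.mk_mul, QuotientGroup.mk_mul, S.mk_conj (by omega) hA hBa]
      _ = (⁅engel g a n * engel u a n, a⁆ : G) := by
          rw [commutatorElement_mul_left_eq_conj_mul]; rfl
      _ = (engel (g * u) a (n + 1) : G) :=
          S.mk_of_le (le_of_eq (by ring)) (S.commutatorElement_congr_left ih ha)

theorem commutatorElement_pow_right_modEq {q M : ℕ} (hM : 1 ≤ M) {w b : G} (hw : w ∈ S.D q)
    (hb : b ∈ S.D M) (t : ℕ) : ⁅w, b ^ t⁆ ≡ ⁅w, b⁆ ^ t mod S.D (q + M + 1) := by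
  induction t with
  | zero => simp
  | succ t ih =>
    rw [show ⁅w, b ^ (t + 1)⁆ = ⁅w, b⁆ * (b * ⁅w, b ^ t⁆ * b⁻¹) by
        rw [pow_succ', commutatorElement_mul_right_eq_mul_conj]; group,
      QuotientGroup.mk_mul, S.mk_conj (by omega) hb (S.commutatorElement_mem hw (pow_mem hb t)),
      ih, ← QuotientGroup.mk_mul, ← pow_succ']

theorem commutatorElement_pow_left_modEq {q M : ℕ} (hq : 1 ≤ q) {w b : G} (hw : w ∈ S.D q)
    (hb : b ∈ S.D M) (t : ℕ) : ⁅w ^ t, b⁆ ≡ ⁅w, b⁆ ^ t mod S.D (q + M + 1) := by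
  rw [← commutatorElement_inv, QuotientGroup.mk_inv, add_comm q M,
    S.commutatorElement_pow_right_modEq hq hb hw t, ← QuotientGroup.mk_inv, ← inv_pow,
    commutatorElement_inv]

theorem engel_pow_right_modEq {j M : ℕ} (hj : 1 ≤ j) (hM : 1 ≤ M) {y b : G} (hy : y ∈ S.D j)
    (hb : b ∈ S.D M) (t N : ℕ) :
    engel y (b ^ t) N ≡ engel y b N ^ t ^ N mod S.D (j + N * M + 1) := by
  induction N with
  | zero => simp [engel]
  | succ N ih =>
    have hW := S.engel_mem hy hb N
    have hleft : ⁅engel y b N ^ t ^ N, b⁆ ≡ engel y b (N + 1) ^ t ^ N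
        mod S.D (j + (N + 1) * M + 1) :=
      S.mk_of_le (le_of_eq (by ring)) (S.commutatorElement_pow_left_modEq (by omega) hW hb _)
    calc engel y (b ^ t) (N + 1)
        ≡ ⁅engel y b N ^ t ^ N, b ^ t⁆ mod S.D (j + (N + 1) * M + 1) :=
          S.mk_of_le (le_of_eq (by ring)) (S.commutatorElement_congr_left ih (pow_mem hb t))
      _ = (⁅engel y b N ^ t ^ N, b⁆ ^ t : G) :=
          S.mk_of_le (le_of_eq (by ring))
            (S.commutatorElement_pow_right_modEq hM (pow_mem hW _) hb t)
      _ = ((engel y b (N + 1) ^ t ^ N) ^ t : G) := by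
          rw [QuotientGroup.mk_pow, hleft, ← QuotientGroup.mk_pow]
      _ = (engel y b (N + 1) ^ t ^ (N + 1) : G) := by rw [← pow_mul, ← pow_succ]

theorem mem_succ_of_pow_mem (hp : 2 ≤ p) {q c : ℕ} (hq : 1 ≤ q) (hc : c.Coprime p) {w : G}
    (hw : w ∈ S.D q) (hwc : w ^ c ∈ S.D (q + 1)) : w ∈ S.D (q + 1) := by
  have hwp : w ^ p ∈ S.D (q + 1) := S.D_antitone (by nlinarith) (S.pow_prime_mem hw)
  have : (w : G ⧸ S.D (q + 1)) ^ c.gcd p = 1 :=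
    pow_gcd_eq_one.2 ⟨(QuotientGroup.eq_one_iff _).2 hwc, (QuotientGroup.eq_one_iff _).2 hwp⟩
  rwa [hc.gcd_eq_one, pow_one, QuotientGroup.eq_one_iff] at this

theorem engel_mem_of_engel_pow_mem (hp : 2 ≤ p) {j M t N : ℕ} (hj : 1 ≤ j) (hM : 1 ≤ M)
    (ht : t.Coprime p) {y b : G} (hy : y ∈ S.D j) (hb : b ∈ S.D M)
    (h : engel y (b ^ t) N ∈ S.D (j + N * M + 1)) : engel y b N ∈ S.D (j + N * M + 1) := by
  refine S.mem_succ_of_pow_mem hp (by omega) (ht.pow_left N) (S.engel_mem hy hb N) ?_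
  rwa [← QuotientGroup.eq_one_iff, ← S.engel_pow_right_modEq hj hM hy hb,
    QuotientGroup.eq_one_iff]

/-- Lazard's lemma `(ad x*)^p = ad (x^p)*`, in the degrees where `D (j + i) / D (j + p * i + 1)`
is abelian (this is what the bound on `j` gives) of exponent `p`. -/
theorem engel_prime_modEq [Fact p.Prime] {i j : ℕ} {x y : G} (hx : x ∈ S.D i)
    (hy : y ∈ S.D j) (hj : (p - 2) * i + 1 ≤ j) :
    engel y x p ≡ ⁅y, x ^ p⁆ mod S.D (j + p * i + 1) := by
  have hp := (Fact.out : p.Prime).two_le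
  have hpi : p * i = (p - 2) * i + 2 * i := by rw [← add_mul, Nat.sub_add_cancel hp]
  let π := QuotientGroup.mk' (S.D (j + p * i + 1))
  let A := (S.D (j + i)).map π
  have : IsMulCommutative A := ⟨⟨by
    rintro ⟨_, u, hu, rfl⟩ ⟨_, v, hv, rfl⟩
    exact Subtype.ext (S.mk_mul_comm (by omega) hu hv)⟩⟩
  have hA : ∀ a ∈ A, a ^ p = 1 := by
    rintro _ ⟨u, hu, rfl⟩
    exact (QuotientGroup.eq_one_iff _).2 (S.D_antitone (by nlinarith) (S.pow_prime_mem hu))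
  have hxA : ∀ a ∈ A, π x * a * (π x)⁻¹ ∈ A := by
    rintro _ ⟨u, hu, rfl⟩
    exact ⟨x * u * x⁻¹, (S.normal _).conj_mem u hu x, by simp [π]⟩
  have hyx : ⁅π y, π x⁆ ∈ A :=
    ⟨⁅y, x⁆, S.commutatorElement_mem hy hx, map_commutatorElement π y x⟩
  have := engel_prime_eq_commutatorElement_pow A hA hxA hyx
  rwa [← map_engel, ← map_pow, ← map_commutatorElement] at this

theorem engel_prime_mul_modEq [Fact p.Prime] {i j : ℕ} {x y : G} (hx : x ∈ S.D i)
    (hy : y ∈ S.D j) (hj : (p - 2) * i + 1 ≤ j) (k : ℕ) :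
    engel y x (p * k) ≡ engel y (x ^ p) k mod S.D (j + p * k * i + 1) := by
  induction k with
  | zero => rfl
  | succ k ih =>
    have hZ := S.engel_mem hy (S.pow_prime_mem hx) k
    calc engel y x (p * (k + 1))
        ≡ engel (engel y (x ^ p) k) x p mod S.D (j + p * (k + 1) * i + 1) := by
          rw [mul_add_one, engel_add]
          exact S.mk_of_le (le_of_eq (by ring)) (S.engel_congr_left ih hx p)
      _ = (⁅engel y (x ^ p) k, x ^ p⁆ : G) :=
          S.mk_of_le (le_of_eq (by ring)) (S.engel_prime_modEq hx hZ (by omega))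

theorem engel_prime_pow_mul_modEq [Fact p.Prime] (s : ℕ) {i j : ℕ} {x y : G} (hx : x ∈ S.D i)
    (hy : y ∈ S.D j) (hj : (p - 2) * p ^ s * i + 1 ≤ j) (N : ℕ) :
    engel y x (p ^ s * N) ≡ engel y (x ^ p ^ s) N mod S.D (j + p ^ s * N * i + 1) := by
  induction s generalizing i x with
  | zero => simp
  | succ s ih =>
    have hj' : (p - 2) * i + 1 ≤ j := le_trans (by
      have := Nat.one_le_pow (s + 1) p (Fact.out : p.Prime).pos
      gcongr; nlinarith) hj
    calc engel y x (p ^ (s + 1) * N)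
        ≡ engel y (x ^ p) (p ^ s * N) mod S.D (j + p ^ (s + 1) * N * i + 1) := by
          rw [show p ^ (s + 1) * N = p * (p ^ s * N) by ring]
          exact S.mk_of_le (le_of_eq (by ring)) (S.engel_prime_mul_modEq hx hy hj' (p ^ s * N))
      _ = (engel y (x ^ p ^ (s + 1)) N : G) := by
          have := ih (S.pow_prime_mem hx) (le_trans (le_of_eq (by ring)) hj)
          rw [pow_succ', pow_mul]
          exact S.mk_of_le (le_of_eq (by ring)) this

theorem engel_add_mem_of_forall_le {i B n : ℕ} (hi : 1 ≤ i) {x : G} (hx : x ∈ S.D i)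
    (h : ∀ j, B ≤ j → ∀ y ∈ S.D j, engel y x n ∈ S.D (j + n * i + 1)) {j : ℕ} {y : G}
    (hy : y ∈ S.D j) : engel y x (B + n) ∈ S.D (j + (B + n) * i + 1) := by
  rw [engel_add]
  exact S.D_antitone (le_of_eq (by ring))
    (h _ (le_add_left (Nat.le_mul_of_pos_right B hi)) _ (S.engel_mem hy hx B))

end NpSeries

section Profinite

variable {G : Type*} [Group G] [TopologicalSpace G] [IsTopologicalGroup G]

theorem continuous_engel (a : G) (n : ℕ) : Continuous fun g : G ↦ engel g a n := by
  induction n with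
  | zero => exact continuous_id
  | succ n ih =>
    simp only [engel, commutatorElement_def]
    exact ((ih.mul continuous_const).mul ih.inv).mul continuous_const

theorem exists_forall_engel_mem_openNormalSubgroup [CompactSpace G] {a : G}
    (ha : ∀ g : G, ∃ n, engel g a n = 1) (U : OpenNormalSubgroup G) :
    ∃ L, ∀ g : G, engel g a L ∈ U := by
  have hmono : Monotone fun n ↦ {g : G | engel g a n ∈ U} :=
    monotone_nat_of_le_succ fun n g (hg : engel g a n ∈ U) ↦ by
      show ⁅engel g a n, a⁆ ∈ U
      rw [show ⁅engel g a n, a⁆ = engel g a n * (a * (engel g a n)⁻¹ * a⁻¹) by group]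
      exact mul_mem hg (U.isNormal'.conj_mem _ (inv_mem hg) a)
  have hcover : Set.univ ⊆ ⋃ n, {g : G | engel g a n ∈ U} := fun g _ ↦ by
    obtain ⟨n, hn⟩ := ha g
    exact Set.mem_iUnion.2 ⟨n, show engel g a n ∈ U by rw [hn]; exact one_mem U⟩
  obtain ⟨L, hL⟩ := isCompact_univ.elim_directed_cover _
    (fun n ↦ U.isOpen'.preimage (continuous_engel a n)) hcover hmono.directed_le
  exact ⟨L, fun g ↦ hL (Set.mem_univ g)⟩

theorem exists_openNormalSubgroup_engel_mul_eq_one [CompactSpace G] [T2Space G]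
    [TotallyDisconnectedSpace G] {a : G} (ha : ∀ g : G, ∃ n, engel g a n = 1) :
    ∃ (g₀ : G) (n : ℕ) (U : OpenNormalSubgroup G), ∀ u ∈ U, engel (g₀ * u) a n = 1 := by
  -- Baire category: one of the closed sets `{g | [g, n a] = 1}` has an interior point `g₀`
  have hclosed (n : ℕ) : IsClosed {g : G | engel g a n = 1} :=
    isClosed_eq (continuous_engel a n) continuous_const
  obtain ⟨n, g₀, hg₀⟩ :=
    nonempty_interior_of_iUnion_of_closed hclosed (Set.iUnion_eq_univ_iff.2 ha)
  obtain ⟨U, hU⟩ := ProfiniteGrp.exist_openNormalSubgroup_sub_open_nhds_of_one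
    (isOpen_interior.preimage (continuous_const_mul g₀)) (by simpa using hg₀)
  exact ⟨g₀, n, U, fun u hu ↦ interior_subset (s := {g : G | engel g a n = 1}) (hU hu)⟩

theorem NpSeries.exists_engel_mem_of_forall_engel_eq_one [CompactSpace G] [T2Space G]
    [TotallyDisconnectedSpace G] {p : ℕ} (S : NpSeries G p) {m : ℕ} {a : G} (ha : a ∈ S.D m)
    (hE : ∀ g : G, ∃ n, engel g a n = 1) :
    ∃ N, ∀ j, ∀ u ∈ S.D j, engel u a N ∈ S.D (j + N * m + 1) := by
  obtain ⟨g₀, n, U, hU⟩ := exists_openNormalSubgroup_engel_mul_eq_one hE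
  -- for `w := [u, L a] ∈ U`: `[w, n a] ≡ [g₀, n a]⁻¹ [g₀ w, n a] = 1`
  obtain ⟨L, hL⟩ := exists_forall_engel_mem_openNormalSubgroup hE U
  refine ⟨L + n, fun j u hu ↦ ?_⟩
  have h₀ : engel g₀ a n = 1 := by simpa using hU 1 (one_mem U)
  have := S.engel_mul_modEq ha (S.engel_mem hu ha L) g₀ n
  rw [h₀, one_mul, hU _ (hL u), QuotientGroup.mk_one, QuotientGroup.eq_one_iff] at this
  rw [engel_add]
  exact S.D_antitone (le_of_eq (by ring)) this

end Profinite

theorem stmt8_general {G : Type*} [Group G] [TopologicalSpace G] [IsTopologicalGroup G]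
    [CompactSpace G] [T2Space G] [TotallyDisconnectedSpace G]
    {p : ℕ} (hp : p.Prime)
    (D : ℕ → Subgroup G) (hD1 : D 1 = ⊤)
    (hmono : ∀ i, D (i + 1) ≤ D i)
    (hcomm : ∀ i j, ∀ x ∈ D i, ∀ y ∈ D j, ⁅x, y⁆ ∈ D (i + j))
    (hpow : ∀ i, ∀ x ∈ D i, x ^ p ∈ D (p * i))
    (i : ℕ) (hi : 1 ≤ i) (x : G) (hx : x ∈ D i)
    (d : ℕ) (hd : 0 < d)
    (hEngel : ∀ g : G, ∃ n : ℕ, engel g (x ^ d) n = 1) :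
    ∃ n : ℕ, 0 < n ∧ ∀ j, 1 ≤ j → ∀ y ∈ D j, engel y x n ∈ D (j + n * i + 1) := by
  have : Fact p.Prime := ⟨hp⟩
  obtain ⟨S, rfl⟩ : ∃ S : NpSeries G p, S.D = D :=
    ⟨⟨D, hD1, hmono, fun hu hv ↦ hcomm _ _ _ hu _ hv, hpow _ _⟩, rfl⟩
  obtain ⟨s, t, hpt, rfl⟩ := Nat.exists_eq_pow_mul_and_not_dvd hd.ne' p hp.one_lt.ne'
  have hb : x ^ p ^ s ∈ S.D (p ^ s * i) := S.pow_prime_pow_mem hx s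
  obtain ⟨N, hN⟩ := S.exists_engel_mem_of_forall_engel_eq_one (pow_mem hb t)
    (by simpa only [← pow_mul] using hEngel)
  refine ⟨(p - 2) * p ^ s * i + 1 + p ^ s * N, by omega,
    fun k _ z hz ↦ S.engel_add_mem_of_forall_le hi hx (fun j hj y hy ↦ ?_) hz⟩
  have hbN := S.engel_mem_of_engel_pow_mem hp.two_le (by omega)
    (Nat.mul_pos (pow_pos hp.pos s) hi) (Nat.coprime_comm.1 (hp.coprime_iff_not_dvd.2 hpt))
    hy hb (hN j y hy)
  rw [← QuotientGroup.eq_one_iff, S.engel_prime_pow_mul_modEq s hx hy hj N,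
    QuotientGroup.eq_one_iff]
  exact S.D_antitone (le_of_eq (by ring)) hbN

/-- Let `G` be a profinite group with its `p`-dimension central series `D 1 ≥ D 2 ≥ ⋯`
(an `N_p`-series of closed subgroups) and let `x ∈ D i \ D (i+1)` be such that `x^d` is a
left Engel element of `G` for some `d > 0`.  Then the corresponding homogeneous element `x*`
of the associated Lie algebra `L(G)` over `F_p` is ad-nilpotent: there is `n` with
`[y, ₙ x] ∈ D (j + n*i + 1)` for every homogeneous `y ∈ D j`. -/
theorem stmt8 {G : Type*} [Group G] [TopologicalSpace G] [IsTopologicalGroup G]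
    [CompactSpace G] [T2Space G] [TotallyDisconnectedSpace G]
    {p : ℕ} (hp : p.Prime)
    (D : ℕ → Subgroup G) (hD1 : D 1 = ⊤)
    (hmono : ∀ i, D (i + 1) ≤ D i)
    (hclosed : ∀ i, IsClosed ((D i : Subgroup G) : Set G))
    (hcomm : ∀ i j, ∀ x ∈ D i, ∀ y ∈ D j, ⁅x, y⁆ ∈ D (i + j))
    (hpow : ∀ i, ∀ x ∈ D i, x ^ p ∈ D (p * i))
    (i : ℕ) (hi : 1 ≤ i) (x : G) (hx : x ∈ D i) (hx' : x ∉ D (i + 1))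
    (d : ℕ) (hd : 0 < d)
    (hEngel : ∀ g : G, ∃ n : ℕ, engel g (x ^ d) n = 1) :
    ∃ n : ℕ, 0 < n ∧ ∀ j, 1 ≤ j → ∀ y ∈ D j, engel y x n ∈ D (j + n * i + 1) :=
  stmt8_general hp D hD1 hmono hcomm hpow i hi x hx d hd hEngel
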